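/- arXiv:2308.10046 — 5 statements merged into one kernel-verified Lean document; each statement's English description precedes it below -/
import Mathlib

section
/- Let λ_A > 0 be a real number, δ, γ ∈ (0,1) and r ∈ [0,1]. Define the period-1 acquihire thresholds λ_A¹ := λ_A·2/(2−γδ), λ_A² := λ_A·(2−δγ)/(2−δγ−(1−r)(1−γ)δγ), and λ_A³ := λ_A. Then the denominators are positive and λ_A¹ ≥ λ_A² ≥ λ_A³. (Threshold ordering established in the proof of Proposition 3.) -/
/-- Threshold ordering in the proof of Proposition 3: the denominators of the
period-1 acquihire thresholds are positive and λ_A¹ ≥ λ_A² ≥ λ_A³. -/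
theorem period1_threshold_ordering
    (lamA δ γ r : ℝ)
    (hlamA : 0 < lamA)
    (hδ0 : 0 < δ) (hδ1 : δ < 1)
    (hγ0 : 0 < γ) (hγ1 : γ < 1)
    (hr0 : 0 ≤ r) (hr1 : r ≤ 1) :
    0 < 2 - γ * δ ∧
    0 < 2 - δ * γ - (1 - r) * (1 - γ) * δ * γ ∧
    lamA * 2 / (2 - γ * δ) ≥
      lamA * (2 - δ * γ) / (2 - δ * γ - (1 - r) * (1 - γ) * δ * γ) ∧
    lamA * (2 - δ * γ) / (2 - δ * γ - (1 - r) * (1 - γ) * δ * γ) ≥ lamA := by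
  have hδγ : 0 < δ * γ := mul_pos hδ0 hγ0
  have hδγ1 : δ * γ < 1 := by nlinarith
  have hs0 : 0 ≤ (1 - r) * (1 - γ) := mul_nonneg (by linarith) (by linarith)
  have hs1 : (1 - r) * (1 - γ) ≤ 1 - γ := by nlinarith
  have h1 : 0 < 2 - γ * δ := by nlinarith
  have h2 : 0 < 2 - δ * γ - (1 - r) * (1 - γ) * δ * γ := by nlinarith
  refine ⟨h1, h2, ?_, ?_⟩
  · rw [ge_iff_le, div_le_div_iff₀ h2 h1]
    nlinarith [mul_nonneg (mul_nonneg hδγ.le hγ0.le) (by linarith : (0:ℝ) ≤ 2 - δ),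
      mul_le_mul_of_nonneg_left hs1 hδγ.le,
      mul_pos hlamA hδγ, mul_nonneg hlamA.le (mul_nonneg hδγ.le hs0)]
  · rw [ge_iff_le, le_div_iff₀ h2]
    nlinarith [mul_nonneg hlamA.le (mul_nonneg hδγ.le hs0)]
end

section
/- Under the equal-proportional-gain/loss specification, where Π̄_F^L = L·Π_F and Πu_F^H = h·Π_F for F ∈ {D, C} with L > 1, 0 ≤ h < 1, Π_D > Π_C > 0, and πE > (L−1)·Π_D: both sufficient conditions of Proposition B1 hold, namely Π_C·(1−h) < Π_D·(1−h) and Π_C·(L−1) < Π_D·(L−1), and consequently λ_C = (πE + Π_C − L·Π_C)/(Π_C − h·Π_C) > (πE + Π_D − L·Π_D)/(Π_D − h·Π_D) = λ_D. -/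
/-- Equal-proportional-gain/loss specification: both sufficient conditions of
Proposition B1 hold and consequently λ_C > λ_D. -/
theorem equal_proportional_spec
    (PD PC piE L h : ℝ)
    (hL : 1 < L) (hh0 : 0 ≤ h) (hh1 : h < 1)
    (hDC : PD > PC) (hC : 0 < PC)
    (hpiE : piE > (L - 1) * PD) :
    PC * (1 - h) < PD * (1 - h) ∧
    PC * (L - 1) < PD * (L - 1) ∧
    (piE + PC - L * PC) / (PC - h * PC) > (piE + PD - L * PD) / (PD - h * PD) := by
  have hD : 0 < PD := lt_trans hC hDC
  refine ⟨by nlinarith, by nlinarith, ?_⟩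
  have hden1 : 0 < PD - h * PD := by nlinarith
  have hden2 : 0 < PC - h * PC := by nlinarith
  rw [gt_iff_lt, div_lt_div_iff₀ hden1 hden2]
  have hpi : 0 < piE := by nlinarith
  nlinarith [mul_pos hpi (sub_pos.mpr hDC), mul_pos (mul_pos hpi (sub_pos.mpr hDC)) (sub_pos.mpr hh1)]
end

section
/- Consider the n-firm Cournot market with inverse demand P = a − b·Σqᵢ, common marginal cost c, and let an acquihire of type θ reduce the acquirer's marginal cost to c − θ. The equilibrium profits are Π_F(n) = (a−c)²/(b(n+1)²) with no acquisition, Π̄^θ(n) = (a−c+nθ)²/(b(n+1)²) for an acquirer of type θ, and Πu^H(n) = (a−c−H)²/(b(n+1)²) for a non-acquirer facing a high-match acquirer. Then for any fixed πE > 0, b > 0, and 0 ≤ θ ≤ H < a − c, there exists N such that for all n ≥ N the two conditions 'πE > Π̄^θ(n) − Π_F(n)' (the acquisition is inefficient) and 'Π̄^θ(n) − Πu^H(n) > πE' (the acquisition is individually attractive) cannot hold simultaneously. Hence talent hoarding vanishes as the number of firms grows. (Multiple-firms extension, Appendix B.2.) -/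
/-- Multiple-firms extension (Appendix B.2): in the n-firm Cournot market, for
any fixed πE > 0, b > 0 and 0 ≤ θ ≤ H < a − c, there exists N such that for all
n ≥ N the conditions "the acquisition is inefficient" and "the acquisition is
individually attractive" cannot hold simultaneously; talent hoarding vanishes
as the number of firms grows. -/
theorem talent_hoarding_vanishes_with_many_firms
    (a b c piE H θ : ℝ)
    (hb : 0 < b) (hpiE : 0 < piE)
    (hθ0 : 0 ≤ θ) (hθH : θ ≤ H) (hH : H < a - c) :
    ∃ N : ℕ, ∀ n : ℕ, n ≥ N →
      ¬ (piE > (a - c + (n : ℝ) * θ) ^ 2 / (b * ((n : ℝ) + 1) ^ 2)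
              - (a - c) ^ 2 / (b * ((n : ℝ) + 1) ^ 2) ∧
         (a - c + (n : ℝ) * θ) ^ 2 / (b * ((n : ℝ) + 1) ^ 2)
              - (a - c - H) ^ 2 / (b * ((n : ℝ) + 1) ^ 2) > piE) := by
  have ha : 0 < a - c := lt_of_le_of_lt (hθ0.trans hθH) hH
  rcases le_or_gt piE (θ ^ 2 / b) with hcase | hcase
  · -- piE ≤ θ²/b : the first condition eventually fails
    have htheta2 : piE * b ≤ θ ^ 2 := by
      rw [le_div_iff₀ hb] at hcase; linarith
    have hθpos : 0 < θ := by
      rcases hθ0.lt_or_eq with h | h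
      · exact h
      · rw [← h] at htheta2; nlinarith
    refine ⟨⌈θ / (2 * ((a - c) - θ))⌉₊ + 1, fun n hn ⟨h1, h2⟩ => ?_⟩
    have hDθ : 0 < (a - c) - θ := by linarith [hθH.trans_lt hH]
    have hn0 : (0 : ℝ) ≤ (n : ℝ) := Nat.cast_nonneg n
    have hn2 : θ / (2 * ((a - c) - θ)) ≤ (n : ℝ) := by
      calc θ / (2 * ((a - c) - θ))
          ≤ (⌈θ / (2 * ((a - c) - θ))⌉₊ : ℝ) := Nat.le_ceil _
        _ ≤ (n : ℝ) := by exact_mod_cast le_trans (Nat.le_succ _) hn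
    have hn3 : θ ≤ 2 * ((a - c) - θ) * (n : ℝ) := by
      rw [div_le_iff₀ (by linarith)] at hn2; linarith
    have hden : (0 : ℝ) < b * ((n : ℝ) + 1) ^ 2 := by positivity
    rw [div_sub_div_same, gt_iff_lt, div_lt_iff₀ hden] at h1
    nlinarith [mul_le_mul_of_nonneg_right htheta2 (sq_nonneg ((n : ℝ) + 1)),
      mul_le_mul_of_nonneg_left hn3 (mul_nonneg hθ0 hn0)]
  · -- piE > θ²/b : the second condition eventually fails
    have hε0 : 0 < b * piE - θ ^ 2 := by
      rw [div_lt_iff₀ hb] at hcase; linarith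
    refine ⟨⌈(2 * θ * ((a - c) - θ) + H * (2 * (a - c) - H)) / (b * piE - θ ^ 2)⌉₊ + 1,
      fun n hn ⟨h1, h2⟩ => ?_⟩
    have hn0 : (0 : ℝ) ≤ (n : ℝ) := Nat.cast_nonneg n
    have hn1 : (1 : ℝ) ≤ (n : ℝ) := by
      have : 1 ≤ n := le_trans (Nat.le_add_left 1 _) hn
      exact_mod_cast this
    have hn2 : (2 * θ * ((a - c) - θ) + H * (2 * (a - c) - H)) / (b * piE - θ ^ 2) ≤ (n : ℝ) := by
      calc (2 * θ * ((a - c) - θ) + H * (2 * (a - c) - H)) / (b * piE - θ ^ 2)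
          ≤ (⌈(2 * θ * ((a - c) - θ) + H * (2 * (a - c) - H)) / (b * piE - θ ^ 2)⌉₊ : ℝ) :=
            Nat.le_ceil _
        _ ≤ (n : ℝ) := by exact_mod_cast le_trans (Nat.le_succ _) hn
    have hn3 : 2 * θ * ((a - c) - θ) + H * (2 * (a - c) - H) ≤ (b * piE - θ ^ 2) * (n : ℝ) := by
      rw [div_le_iff₀ hε0] at hn2; linarith
    have hden : (0 : ℝ) < b * ((n : ℝ) + 1) ^ 2 := by positivity
    rw [div_sub_div_same, gt_iff_lt, lt_div_iff₀ hden] at h2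
    have hKn : (2 * θ * ((a - c) - θ) + H * (2 * (a - c) - H)) * (n : ℝ)
        ≤ (b * piE - θ ^ 2) * (n : ℝ) * (n : ℝ) := mul_le_mul_of_nonneg_right hn3 hn0
    nlinarith [hKn, hn1, mul_nonneg hθ0 (by linarith : (0:ℝ) ≤ (a - c) - θ),
      mul_nonneg (hθ0.trans hθH) (by linarith : (0:ℝ) ≤ 2 * (a - c) - H),
      mul_nonneg (mul_nonneg hθ0 (by linarith : (0:ℝ) ≤ (a - c) - θ)) (by linarith : (0:ℝ) ≤ (n:ℝ) - 1),
      mul_nonneg (mul_nonneg (hθ0.trans hθH) (by linarith : (0:ℝ) ≤ 2 * (a - c) - H)) (by linarith : (0:ℝ) ≤ (n:ℝ) - 1),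
      sq_nonneg θ, hε0.le]
end

section
/- Under Assumption 1, for any γ ∈ [0,1] and λ ∈ (0,1), and assuming D := ΠF − ΠuH − γ·(Π̄H − ΠF − πE) > 0, the surplus from a low-match firm-1 acquihire under surplus sharing is nonnegative, i.e. (Π̄H − ΠF − πE)·(1 − λγ) + λ·(ΠF − ΠuH) + Π̄L − Π̄H ≥ 0, if and only if λ ≥ λ_{A,S} := (πE + ΠF − Π̄L)/D. (Low-match threshold in the proof of Proposition B3.) -/
/-- Low-match threshold in the proof of Proposition B3: under Assumption 1, for
γ ∈ [0,1], λ ∈ (0,1), and D := ΠF − ΠuH − γ·(Π̄H − ΠF − πE) > 0, the surplus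
from a low-match firm-1 acquihire under surplus sharing is nonnegative iff
λ ≥ λ_{A,S}. -/
theorem surplusSharing_lowMatch_iff_threshold
    (PF PbarH PbarL PuH PuL piE γ lam : ℝ)
    (hpiE : 0 < piE)
    (hA1i1 : PbarH > PF + piE) (hA1i2 : PF + piE > PbarL)
    (hA1ii1 : PF ≥ PuL) (hA1ii2 : PuL > PuH)
    (hγ0 : 0 ≤ γ) (hγ1 : γ ≤ 1)
    (hlam0 : 0 < lam) (hlam1 : lam < 1)
    (hD : 0 < PF - PuH - γ * (PbarH - PF - piE)) :
    (PbarH - PF - piE) * (1 - lam * γ) + lam * (PF - PuH) + PbarL - PbarH ≥ 0 ↔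
      lam ≥ (piE + PF - PbarL) / (PF - PuH - γ * (PbarH - PF - piE)) := by
  rw [ge_iff_le, ge_iff_le, div_le_iff₀ hD]
  constructor <;> intro h <;> nlinarith
end

section
/- Under Assumption 1 (so that Π̄H − ΠF − πE > 0) and assuming D := ΠF − ΠuH − γ·(Π̄H − ΠF − πE) > 0 for γ ∈ [0,1], the surplus-sharing acquihire threshold satisfies λ_{A,S} := (πE + ΠF − Π̄L)/D ≤ 1 if and only if γ ≤ (Π̄L − ΠuH − πE)/(Π̄H − ΠF − πE). Hence talent hoarding can occur only when the entrepreneur's bargaining share is not too large. (Proposition B3.) -/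
/-- Proposition B3: under Assumption 1 and D := ΠF − ΠuH − γ·(Π̄H − ΠF − πE) > 0
for γ ∈ [0,1], the surplus-sharing acquihire threshold satisfies λ_{A,S} ≤ 1
iff γ ≤ (Π̄L − ΠuH − πE)/(Π̄H − ΠF − πE). -/
theorem surplusSharing_threshold_le_one_iff
    (PF PbarH PbarL PuH PuL piE γ : ℝ)
    (hpiE : 0 < piE)
    (hA1i1 : PbarH > PF + piE) (hA1i2 : PF + piE > PbarL)
    (hA1ii1 : PF ≥ PuL) (hA1ii2 : PuL > PuH)
    (hγ0 : 0 ≤ γ) (hγ1 : γ ≤ 1)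
    (hD : 0 < PF - PuH - γ * (PbarH - PF - piE)) :
    (piE + PF - PbarL) / (PF - PuH - γ * (PbarH - PF - piE)) ≤ 1 ↔
      γ ≤ (PbarL - PuH - piE) / (PbarH - PF - piE) := by
  have hS : 0 < PbarH - PF - piE := by linarith
  rw [div_le_one hD, le_div_iff₀ hS]
  constructor <;> intro h <;> nlinarith
end
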